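/- (Up-step contiguity in a_{1k}.) Fix k with 1 ≤ k ≤ n and set Ψ(x) = Φ(α − e_k, δ; x) = ∫_a^b t^{−δ−1} (x_{1k}+x_{2k}t)^{α_k−1} ∏_{j≠k} (x_{1j}+x_{2j}t)^{α_j} dt. Then at every point x with all coordinates positive, Σ_{i≠k} (x_{1i}x_{2k} − x_{1k}x_{2i})·∂Ψ/∂x_{2i}(x) + (Σ_{i=1}^n α_i)·x_{1k}·Ψ(x) = (Σ_{i=1}^n α_i − δ)·Φ(α,δ;x) − [g(t,x)]_{t=a}^{t=b}. -/

import Mathlib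

open Complex Function

/-- Partial derivative of `f` with respect to the coordinate `p`. -/
noncomputable def pd {n : ℕ} (p : Fin 2 × Fin n)
    (f : ((Fin 2 × Fin n) → ℝ) → ℂ) (x : (Fin 2 × Fin n) → ℝ) : ℂ :=
  deriv (fun s : ℝ => f (Function.update x p s)) (x p)

/-- `Φ(α,δ;x) = ∫_a^b t^(−δ−1) ∏ₖ (x_{1k} + x_{2k} t)^{α_k} dt`; the first row
of `x` is indexed by `0 : Fin 2`, the second row by `1 : Fin 2`. -/
noncomputable def Phi {n : ℕ} (α : Fin n → ℂ) (δ : ℂ) (a b : ℝ)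
    (x : (Fin 2 × Fin n) → ℝ) : ℂ :=
  ∫ t in a..b, (t : ℂ) ^ (-δ - 1)
    * ∏ k, ((x (0, k) : ℂ) + (x (1, k) : ℂ) * (t : ℂ)) ^ (α k)

/-- `g(t,x) = t^(−δ) ∏ₖ (x_{1k} + x_{2k} t)^{α_k}`. -/
noncomputable def gfun {n : ℕ} (α : Fin n → ℂ) (δ : ℂ) (t : ℝ)
    (x : (Fin 2 × Fin n) → ℝ) : ℂ :=
  (t : ℂ) ^ (-δ) * ∏ k, ((x (0, k) : ℂ) + (x (1, k) : ℂ) * (t : ℂ)) ^ (α k)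

/-!
Write `Lᵢ(t) = x₁ᵢ + x₂ᵢ t` and `φ_γ(t) = t^(-δ-1) ∏ⱼ Lⱼ(t)^γⱼ` for the integrand of `Φ(γ, δ; x)`.
Differentiating under the integral sign, `∂φ_γ/∂x₂ᵢ = γᵢ t / Lᵢ · φ_γ`, and lowering `αₖ` by one
divides the integrand by `Lₖ`. Because `x₁ᵢx₂ₖ - x₁ₖx₂ᵢ = x₂ₖ Lᵢ - x₂ᵢ Lₖ`, the integrand of the
left-hand side collapses to `φ_α · (Σ αᵢ - t Σ αᵢ x₂ᵢ / Lᵢ)`. On the other hand `g = t · φ_α` has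
logarithmic derivative `(-δ + t Σ αᵢ x₂ᵢ / Lᵢ) / t`, so that integrand is `(Σ αᵢ - δ) φ_α - g'`,
and the fundamental theorem of calculus finishes the proof.
-/

open Set MeasureTheory intervalIntegral

section CpowProduct

variable {ι : Type*} [DecidableEq ι]

theorem Finset.prod_erase_cpow_mul_cpow_sub_one {s : Finset ι} {i : ι} (hi : i ∈ s)
    (f γ : ι → ℂ) (hf : f i ≠ 0) :
    (∏ j ∈ s.erase i, f j ^ γ j) * f i ^ (γ i - 1) = (∏ j ∈ s, f j ^ γ j) / f i := by
  rw [← Finset.mul_prod_erase s _ hi, cpow_sub _ _ hf, cpow_one]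
  field_simp

theorem HasDerivAt.finsetProd_cpow_const {𝕜 : Type*} [NontriviallyNormedField 𝕜]
    [NormedAlgebra 𝕜 ℂ] {s : Finset ι} {f : ι → 𝕜 → ℂ} {f' γ : ι → ℂ} {t : 𝕜}
    (hf : ∀ j ∈ s, HasDerivAt (f j) (f' j) t) (hslit : ∀ j ∈ s, f j t ∈ slitPlane) :
    HasDerivAt (fun t => ∏ j ∈ s, f j t ^ γ j)
      ((∏ j ∈ s, f j t ^ γ j) * ∑ j ∈ s, γ j * f' j / f j t) t := by
  refine (HasDerivAt.fun_finsetProd fun j hj =>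
    (hasStrictDerivAt_cpow_const (hslit j hj)).hasDerivAt.comp t (hf j hj)).congr_deriv ?_
  rw [Finset.mul_sum]
  refine Finset.sum_congr rfl fun j hj => ?_
  simp only [Function.comp_apply, smul_eq_mul]
  linear_combination (γ j * f' j) * Finset.prod_erase_cpow_mul_cpow_sub_one hj (f · t) γ
    (slitPlane_ne_zero (hslit j hj))

end CpowProduct

theorem sum_sdiff_singleton_cross_mul_div_add {ι : Type*} [Fintype ι] [DecidableEq ι]
    (c d α : ι → ℂ) (t : ℂ) (k : ι) (hz : ∀ i, c i + d i * t ≠ 0) :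
    ∑ i ∈ Finset.univ \ {k}, (c i * d k - c k * d i) * (α i * t / (c i + d i * t))
        + (∑ i, α i) * c k
      = (c k + d k * t) * (∑ i, α i - t * ∑ i, α i * d i / (c i + d i * t)) := by
  -- `cᵢdₖ - cₖdᵢ = dₖ zᵢ - dᵢ zₖ` with `zᵢ = cᵢ + dᵢ t`; the summand at `i = k` vanishes
  have hterm : ∀ i, (c i * d k - c k * d i) * (α i * t / (c i + d i * t))
      = α i * t * d k - (c k + d k * t) * t * (α i * d i / (c i + d i * t)) := fun i => by
    field_simp [hz i]
    ring
  rw [Finset.sum_subset Finset.sdiff_subset fun i _ hi => ?_, Finset.sum_congr rfl fun i _ => hterm i,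
    Finset.sum_sub_distrib, ← Finset.sum_mul, ← Finset.sum_mul, ← Finset.mul_sum]
  · ring
  · obtain rfl : i = k := by simpa using hi
    ring

theorem hasDerivAt_intervalIntegral_of_continuousOn {E : Type*} [NormedAddCommGroup E]
    [NormedSpace ℝ E] {F F' : ℝ → ℝ → E} {s₀ ε a b : ℝ} (hε : 0 < ε)
    (hF : ContinuousOn (uncurry F) (Metric.closedBall s₀ ε ×ˢ uIcc a b))
    (hF' : ContinuousOn (uncurry F') (Metric.closedBall s₀ ε ×ˢ uIcc a b))
    (hderiv : ∀ s ∈ Metric.ball s₀ ε, ∀ t ∈ uIcc a b, HasDerivAt (F · t) (F' s t) s) :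
    HasDerivAt (fun s => ∫ t in a..b, F s t) (∫ t in a..b, F' s₀ t) s₀ := by
  have hslice : ∀ {G : ℝ → ℝ → E}, ContinuousOn (uncurry G) (Metric.closedBall s₀ ε ×ˢ uIcc a b) →
      ∀ s ∈ Metric.closedBall s₀ ε, ContinuousOn (G s) (uIcc a b) := fun hG s hs =>
    (hG.comp (Continuous.prodMk_right s).continuousOn fun _ ht => ⟨hs, ht⟩ :)
  have hmeas : ∀ {G : ℝ → ℝ → E}, ContinuousOn (uncurry G) (Metric.closedBall s₀ ε ×ˢ uIcc a b) →
      ∀ s ∈ Metric.closedBall s₀ ε, AEStronglyMeasurable (G s) (volume.restrict (uIoc a b)) :=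
    fun hG s hs => ((hslice hG s hs).mono uIoc_subset_uIcc).aestronglyMeasurable measurableSet_uIoc
  have hs₀ : s₀ ∈ Metric.closedBall s₀ ε := Metric.mem_closedBall_self hε.le
  obtain ⟨C, hC⟩ :=
    ((isCompact_closedBall s₀ ε).prod isCompact_uIcc).exists_bound_of_continuousOn hF'
  refine (hasDerivAt_integral_of_dominated_loc_of_deriv_le (bound := fun _ => C)
    (Metric.ball_mem_nhds s₀ hε) ?_ (hslice hF s₀ hs₀).intervalIntegrable (hmeas hF' s₀ hs₀)
    (ae_of_all _ fun t ht s hs => hC (s, t) ⟨Metric.ball_subset_closedBall hs, uIoc_subset_uIcc ht⟩)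
    intervalIntegrable_const
    (ae_of_all _ fun t ht s hs => hderiv s hs t (uIoc_subset_uIcc ht))).2
  filter_upwards [Metric.closedBall_mem_nhds s₀ hε] with s hs using hmeas hF s hs

section Integrand

variable {n : ℕ}

def linForm (x : (Fin 2 × Fin n) → ℝ) (j : Fin n) (t : ℝ) : ℂ :=
  (x (0, j) : ℂ) + (x (1, j) : ℂ) * (t : ℂ)

noncomputable def phiIntegrand (γ : Fin n → ℂ) (δ : ℂ) (x : (Fin 2 × Fin n) → ℝ) (t : ℝ) : ℂ :=
  (t : ℂ) ^ (-δ - 1) * ∏ j, linForm x j t ^ γ j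

theorem Phi_eq_integral_phiIntegrand (γ : Fin n → ℂ) (δ : ℂ) (a b : ℝ)
    (x : (Fin 2 × Fin n) → ℝ) :
    Phi γ δ a b x = ∫ t in a..b, phiIntegrand γ δ x t := rfl

theorem continuous_linForm (j : Fin n) :
    Continuous fun p : ((Fin 2 × Fin n) → ℝ) × ℝ => linForm p.1 j p.2 := by
  unfold linForm; fun_prop

theorem hasDerivAt_linForm (x : (Fin 2 × Fin n) → ℝ) (j : Fin n) (t : ℝ) :
    HasDerivAt (linForm x j) (x (1, j) : ℂ) t :=
  (((hasDerivAt_id t).ofReal_comp.const_mul (x (1, j) : ℂ)).const_add (x (0, j) : ℂ)).congr_deriv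
    (by simp)

theorem hasDerivAt_linForm_update (i j : Fin n) (x : (Fin 2 × Fin n) → ℝ) (s t : ℝ) :
    HasDerivAt (fun s => linForm (update x (1, i) s) j t) (if j = i then (t : ℂ) else 0) s := by
  by_cases hji : j = i
  · subst hji
    simp only [linForm, update_self, if_true,
      update_of_ne (show ((0 : Fin 2), j) ≠ (1, j) by simp)]
    simpa using ((hasDerivAt_id s).ofReal_comp.mul_const (t : ℂ)).const_add (x (0, j) : ℂ)
  · simp only [linForm, hji, if_false, update_of_ne (show ((0 : Fin 2), j) ≠ (1, i) by simp),
      update_of_ne (show ((1 : Fin 2), j) ≠ (1, i) by simp [hji])]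
    exact hasDerivAt_const _ _

variable {x : (Fin 2 × Fin n) → ℝ} {t : ℝ}

theorem linForm_mem_slitPlane (hx : ∀ p, 0 < x p) (ht : 0 < t) (j : Fin n) :
    linForm x j t ∈ slitPlane := by
  have : linForm x j t = ((x (0, j) + x (1, j) * t : ℝ) : ℂ) := by push_cast [linForm]; rfl
  exact this ▸ ofReal_mem_slitPlane.2 (by have := hx (0, j); have := hx (1, j); positivity)

theorem continuousOn_inv_linForm (hx : ∀ p, 0 < x p) (j : Fin n) :
    ContinuousOn (fun t : ℝ => (linForm x j t)⁻¹) (Ioi 0) :=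
  ((continuous_linForm j).comp (Continuous.prodMk_right x)).continuousOn.inv₀
    fun _ ht => slitPlane_ne_zero (linForm_mem_slitPlane hx ht j)

theorem continuousAt_phiIntegrand (γ : Fin n → ℂ) (δ : ℂ) (hx : ∀ p, 0 < x p) (ht : 0 < t) :
    ContinuousAt (fun p : ((Fin 2 × Fin n) → ℝ) × ℝ => phiIntegrand γ δ p.1 p.2) (x, t) := by
  refine ((continuous_ofReal.comp continuous_snd).continuousAt.cpow continuousAt_const
    (ofReal_mem_slitPlane.2 ht)).mul (tendsto_finsetProd _ fun j _ => ?_)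
  exact (continuous_linForm j).continuousAt.cpow continuousAt_const (linForm_mem_slitPlane hx ht j)

theorem continuousOn_phiIntegrand (γ : Fin n → ℂ) (δ : ℂ) (hx : ∀ p, 0 < x p) :
    ContinuousOn (phiIntegrand γ δ x) (Ioi 0) := fun _ ht =>
  ((continuousAt_phiIntegrand γ δ hx ht).comp
    (Continuous.prodMk_right x).continuousAt).continuousWithinAt

theorem hasDerivAt_phiIntegrand_update (γ : Fin n → ℂ) (δ : ℂ) (i : Fin n)
    (hx : ∀ p, 0 < x p) (ht : 0 < t) :
    HasDerivAt (fun s => phiIntegrand γ δ (update x (1, i) s) t)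
      (γ i * t / linForm x i t * phiIntegrand γ δ x t) (x (1, i)) := by
  have hprod := HasDerivAt.finsetProd_cpow_const (s := Finset.univ) (γ := γ)
    (fun j _ => hasDerivAt_linForm_update i j x (x (1, i)) t)
    (fun j _ => by simpa using linForm_mem_slitPlane hx ht j)
  refine (hprod.const_mul ((t : ℂ) ^ (-δ - 1))).congr_deriv ?_
  simp only [update_eq_self, mul_ite, mul_zero, ite_div, zero_div, Finset.sum_ite_eq',
    Finset.mem_univ, if_true, phiIntegrand]
  ring

theorem pd_Phi_eq_integral (γ : Fin n → ℂ) (δ : ℂ) {a b : ℝ} (ha : 0 < a) (hb : 0 < b)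
    (i : Fin n) (hx : ∀ p, 0 < x p) :
    pd (1, i) (Phi γ δ a b) x
      = ∫ t in a..b, γ i * t / linForm x i t * phiIntegrand γ δ x t := by
  have hpos : ∀ p ∈ Metric.closedBall (x (1, i)) (x (1, i) / 2) ×ˢ uIcc a b,
      (∀ q, 0 < update x (1, i) p.1 q) ∧ 0 < p.2 := by
    rintro ⟨s, t⟩ ⟨hs, ht⟩
    have hx₁ := hx (1, i)
    rw [Metric.mem_closedBall, Real.dist_eq, abs_le] at hs
    refine ⟨fun q => ?_, (lt_min ha hb).trans_le ht.1⟩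
    rcases eq_or_ne q (1, i) with rfl | hq
    · simp only [update_self]; linarith
    · simpa [update_of_ne hq] using hx q
  set e : ℝ × ℝ → ((Fin 2 × Fin n) → ℝ) × ℝ := fun p => (update x (1, i) p.1, p.2)
  have he : Continuous e := by fun_prop
  have hF : ContinuousOn (uncurry fun s t => phiIntegrand γ δ (update x (1, i) s) t)
      (Metric.closedBall (x (1, i)) (x (1, i) / 2) ×ˢ uIcc a b) := fun p hp =>
    ((continuousAt_phiIntegrand γ δ (hpos p hp).1 (hpos p hp).2).comp
      (f := e) he.continuousAt).continuousWithinAt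
  have hF' : ContinuousOn (uncurry fun s t =>
      γ i * t / linForm (update x (1, i) s) i t * phiIntegrand γ δ (update x (1, i) s) t)
      (Metric.closedBall (x (1, i)) (x (1, i) / 2) ×ˢ uIcc a b) := fun p hp =>
    (((continuous_const.mul (continuous_ofReal.comp continuous_snd)).continuousAt.div
      ((continuous_linForm i).comp he).continuousAt
      (slitPlane_ne_zero (linForm_mem_slitPlane (hpos p hp).1 (hpos p hp).2 i))).mul
      ((continuousAt_phiIntegrand γ δ (hpos p hp).1 (hpos p hp).2).comp
        (f := e) he.continuousAt)).continuousWithinAt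
  have hderiv := hasDerivAt_intervalIntegral_of_continuousOn (half_pos (hx (1, i))) hF hF'
    fun s hs t ht => by
      simpa using hasDerivAt_phiIntegrand_update γ δ i
        (hpos (s, t) ⟨Metric.ball_subset_closedBall hs, ht⟩).1
        (hpos (s, t) ⟨Metric.ball_subset_closedBall hs, ht⟩).2
  rw [update_eq_self] at hderiv
  exact hderiv.deriv

theorem hasDerivAt_gfun (γ : Fin n → ℂ) (δ : ℂ) (hx : ∀ p, 0 < x p) (ht : 0 < t) :
    HasDerivAt (fun t => gfun γ δ t x)
      (phiIntegrand γ δ x t * (-δ + t * ∑ j, γ j * x (1, j) / linForm x j t)) t := by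
  have hpow := (hasStrictDerivAt_cpow_const (c := -δ)
    (ofReal_mem_slitPlane.2 ht)).hasDerivAt.comp_ofReal
  have hprod := HasDerivAt.finsetProd_cpow_const (s := Finset.univ) (γ := γ)
    (fun j _ => hasDerivAt_linForm x j t) (fun j _ => linForm_mem_slitPlane hx ht j)
  refine (hpow.mul hprod).congr_deriv ?_
  have ht₀ : (t : ℂ) ≠ 0 := ofReal_ne_zero.2 ht.ne'
  rw [phiIntegrand, cpow_sub _ _ ht₀, cpow_one]
  field_simp

theorem phiIntegrand_update_sub_one (α : Fin n → ℂ) (δ : ℂ) (k : Fin n)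
    (hk : linForm x k t ≠ 0) :
    phiIntegrand (update α k (α k - 1)) δ x t = phiIntegrand α δ x t / linForm x k t := by
  have hprod : ∏ j, linForm x j t ^ update α k (α k - 1) j
      = (∏ j ∈ Finset.univ.erase k, linForm x j t ^ α j) * linForm x k t ^ (α k - 1) := by
    rw [← Finset.prod_erase_mul _ _ (Finset.mem_univ k), update_self]
    congr 1
    exact Finset.prod_congr rfl fun j hj => by rw [update_of_ne (Finset.ne_of_mem_erase hj)]
  rw [phiIntegrand, phiIntegrand, hprod,
    Finset.prod_erase_cpow_mul_cpow_sub_one (Finset.mem_univ k) _ _ hk, mul_div_assoc]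

theorem contiguity_integrand_eq (α : Fin n → ℂ) (δ : ℂ) (k : Fin n) (hx : ∀ p, 0 < x p)
    (ht : 0 < t) :
    ∑ i ∈ Finset.univ \ {k}, ((x (0, i) * x (1, k) - x (0, k) * x (1, i) : ℝ) : ℂ)
        * (update α k (α k - 1) i * t / linForm x i t
          * phiIntegrand (update α k (α k - 1)) δ x t)
      + (∑ i, α i) * (x (0, k) : ℂ) * phiIntegrand (update α k (α k - 1)) δ x t
      = (∑ i, α i - δ) * phiIntegrand α δ x t
        - phiIntegrand α δ x t * (-δ + t * ∑ j, α j * x (1, j) / linForm x j t) := by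
  have hL : ∀ j, linForm x j t ≠ 0 := fun j => slitPlane_ne_zero (linForm_mem_slitPlane hx ht j)
  have hcoeff : ∑ i ∈ Finset.univ \ {k}, ((x (0, i) : ℂ) * x (1, k) - x (0, k) * x (1, i))
        * (α i * t / linForm x i t) + (∑ i, α i) * (x (0, k) : ℂ)
      = linForm x k t * (∑ i, α i - t * ∑ i, α i * x (1, i) / linForm x i t) :=
    sum_sdiff_singleton_cross_mul_div_add (fun j => (x (0, j) : ℂ)) (fun j => (x (1, j) : ℂ))
      α t k hL
  have hsum : ∑ i ∈ Finset.univ \ {k}, ((x (0, i) * x (1, k) - x (0, k) * x (1, i) : ℝ) : ℂ)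
        * (update α k (α k - 1) i * t / linForm x i t
          * phiIntegrand (update α k (α k - 1)) δ x t)
      = (∑ i ∈ Finset.univ \ {k}, ((x (0, i) : ℂ) * x (1, k) - x (0, k) * x (1, i))
        * (α i * t / linForm x i t)) * (phiIntegrand α δ x t / linForm x k t) := by
    rw [phiIntegrand_update_sub_one α δ k (hL k), Finset.sum_mul]
    refine Finset.sum_congr rfl fun i hi => ?_
    rw [update_of_ne (by simpa using hi)]
    push_cast
    ring
  rw [hsum, phiIntegrand_update_sub_one α δ k (hL k), div_eq_mul_inv]
  linear_combination phiIntegrand α δ x t * (linForm x k t)⁻¹ * hcoeff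
    + phiIntegrand α δ x t * (∑ i, α i - t * ∑ i, α i * x (1, i) / linForm x i t)
      * mul_inv_cancel₀ (hL k)

end Integrand

theorem stmt14_general {n : ℕ} (α : Fin n → ℂ) (δ : ℂ) (a b : ℝ)
    (ha : 0 < a) (hab : a < b)
    (k : Fin n) (x : (Fin 2 × Fin n) → ℝ) (hx : ∀ p, 0 < x p) :
    ∑ i ∈ Finset.univ \ {k},
        ((x (0, i) * x (1, k) - x (0, k) * x (1, i) : ℝ) : ℂ)
          * pd (1, i) (Phi (Function.update α k (α k - 1)) δ a b) x
      + (∑ i, α i) * (x (0, k) : ℂ)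
          * Phi (Function.update α k (α k - 1)) δ a b x
      = ((∑ i, α i) - δ) * Phi α δ a b x - (gfun α δ b x - gfun α δ a x) := by
  set β := update α k (α k - 1)
  have hpos : uIcc a b ⊆ Ioi 0 := fun t ht => (lt_min ha (ha.trans hab)).trans_le ht.1
  have hint : ∀ {f : ℝ → ℂ}, ContinuousOn f (Ioi 0) → IntervalIntegrable f volume a b :=
    fun hf => (hf.mono hpos).intervalIntegrable
  have hφ := fun γ : Fin n → ℂ => continuousOn_phiIntegrand γ δ hx
  have hLinv := continuousOn_inv_linForm hx
  have hderiv : ∀ i, ContinuousOn (fun t : ℝ =>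
      ((x (0, i) * x (1, k) - x (0, k) * x (1, i) : ℝ) : ℂ)
        * (β i * t / linForm x i t * phiIntegrand β δ x t)) (Ioi 0) := fun i => by
    simp only [div_eq_mul_inv]
    fun_prop
  have hg' : IntervalIntegrable (fun t : ℝ =>
      phiIntegrand α δ x t * (-δ + t * ∑ j, α j * x (1, j) / linForm x j t)) volume a b := by
    simp only [div_eq_mul_inv]
    exact hint (by fun_prop)
  rw [Finset.sum_congr rfl fun i _ => by
      rw [pd_Phi_eq_integral β δ ha (ha.trans hab) i hx, ← intervalIntegral.integral_const_mul],
    ← integral_finsetSum fun i _ => hint (hderiv i), Phi_eq_integral_phiIntegrand,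
    Phi_eq_integral_phiIntegrand, ← intervalIntegral.integral_const_mul,
    ← intervalIntegral.integral_const_mul,
    ← integral_add (hint (continuousOn_finsetSum _ fun i _ => hderiv i))
      ((hint (hφ β)).const_mul _),
    ← integral_eq_sub_of_hasDerivAt (fun t ht => hasDerivAt_gfun α δ hx (hpos ht)) hg',
    ← integral_sub ((hint (hφ α)).const_mul _) hg']
  exact integral_congr fun t ht => contiguity_integrand_eq α δ k hx (hpos ht)

/-- up-step contiguity in `a_{1k}`, where `Ψ = Φ(α − e_k, δ; ·)`:
`Σ_{i≠k} (x_{1i}x_{2k} − x_{1k}x_{2i})·∂Ψ/∂x_{2i} + (Σᵢ α_i)·x_{1k}·Ψ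
  = (Σᵢ α_i − δ)·Φ(α,δ;x) − [g(t,x)]_{t=a}^{t=b}`. -/
theorem stmt14 {n : ℕ} (hn : 1 ≤ n) (α : Fin n → ℂ) (δ : ℂ) (a b : ℝ)
    (ha : 0 < a) (hab : a < b) (hδ : 0 < (-δ - 1).re) (hα : ∀ k, 0 < (α k).re)
    (k : Fin n) (x : (Fin 2 × Fin n) → ℝ) (hx : ∀ p, 0 < x p) :
    ∑ i ∈ Finset.univ \ {k},
        ((x (0, i) * x (1, k) - x (0, k) * x (1, i) : ℝ) : ℂ)
          * pd (1, i) (Phi (Function.update α k (α k - 1)) δ a b) x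
      + (∑ i, α i) * (x (0, k) : ℂ)
          * Phi (Function.update α k (α k - 1)) δ a b x
      = ((∑ i, α i) - δ) * Phi α δ a b x - (gfun α δ b x - gfun α δ a x) :=
  stmt14_general α δ a b ha hab k x hx
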